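/- The integral ∫₀^∞ ((t²)^{1/3} − (t²−1)^{1/3}) dt, where (t²−1)^{1/3} denotes the real cube root (negative for t<1), converges and equals (3/5)·∫_{−1}^∞ dx/√(x³+1). -/

import Mathlib

open MeasureTheory Set

/-- The real cube root (odd function). -/
noncomputable def cbrt (y : ℝ) : ℝ := Real.sign y * |y| ^ ((1 : ℝ) / 3)

open Filter Real

lemma cbrt_zero : cbrt 0 = 0 := by simp [cbrt, Real.sign_zero]

lemma cbrt_of_pos {y : ℝ} (hy : 0 < y) : cbrt y = y ^ ((1:ℝ)/3) := by
  simp [cbrt, Real.sign_of_pos hy, abs_of_pos hy]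

lemma cbrt_of_neg {y : ℝ} (hy : y < 0) : cbrt y = -((-y) ^ ((1:ℝ)/3)) := by
  simp [cbrt, Real.sign_of_neg hy, abs_of_neg hy]

lemma cbrt_nonneg_eq {y : ℝ} (hy : 0 ≤ y) : cbrt y = y ^ ((1:ℝ)/3) := by
  rcases hy.eq_or_lt with rfl | h
  · simp [cbrt_zero]
  · exact cbrt_of_pos h

lemma rpow_third_cube {y : ℝ} (hy : 0 ≤ y) : (y ^ ((1:ℝ)/3)) ^ 3 = y := by
  rw [← Real.rpow_natCast (y ^ ((1:ℝ)/3)) 3, ← Real.rpow_mul hy]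
  norm_num

lemma cbrt_cube (y : ℝ) : cbrt y ^ 3 = y := by
  rcases lt_trichotomy y 0 with h | rfl | h
  · have := rpow_third_cube (y := -y) (by linarith)
    rw [cbrt_of_neg h]; nlinarith [this]
  · simp [cbrt_zero]
  · rw [cbrt_of_pos h]; exact rpow_third_cube h.le

lemma cbrt_pow3 (x : ℝ) : cbrt (x ^ 3) = x := by
  rcases lt_trichotomy x 0 with h | rfl | h
  · have h3 : x ^ 3 < 0 := Odd.pow_neg ⟨1, by norm_num⟩ h
    rw [cbrt_of_neg h3]
    have : -(x^3) = (-x)^3 := by ring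
    rw [this, ← Real.rpow_natCast (-x) 3, ← Real.rpow_mul (by linarith)]
    norm_num
  · simp [cbrt_zero]
  · rw [cbrt_of_pos (by positivity), ← Real.rpow_natCast x 3, ← Real.rpow_mul h.le]
    norm_num

lemma cbrt_strictMono : StrictMono cbrt := by
  intro a b hab
  by_contra hc
  push_neg at hc
  have := Odd.strictMono_pow (R := ℝ) (⟨1, by norm_num⟩ : Odd 3)
  have h2 : b ≤ a := by
    have := this.le_iff_le.mpr hc
    simpa [cbrt_cube] using this
  linarith

lemma cbrt_inj : Function.Injective cbrt := cbrt_strictMono.injective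

lemma cbrt_eq_zero_iff {y : ℝ} : cbrt y = 0 ↔ y = 0 := by
  constructor
  · intro h; have := cbrt_cube y; rw [h] at this; simpa using this.symm
  · rintro rfl; exact cbrt_zero

lemma cbrt_mul_self (y : ℝ) (hy : y ≠ 0) : y * |y| ^ (-(2:ℝ)/3) = cbrt y := by
  have h1 : y = Real.sign y * |y| := by
    rcases lt_trichotomy y 0 with h | rfl | h
    · simp [Real.sign_of_neg h, abs_of_neg h]
    · simp
    · simp [Real.sign_of_pos h, abs_of_pos h]
  have h2 : |y| * |y| ^ (-(2:ℝ)/3) = |y| ^ ((1:ℝ)/3) := by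
    nth_rewrite 1 [← Real.rpow_one (|y|)]
    rw [← Real.rpow_add (abs_pos.mpr hy)]
    norm_num
  have h3 : y * |y| ^ (-(2:ℝ)/3) = Real.sign y * |y| * |y| ^ (-(2:ℝ)/3) := by rw [← h1]
  rw [h3, mul_assoc, h2]; rfl

lemma continuous_cbrt : Continuous cbrt := by
  have habs : Continuous fun y : ℝ => |y| ^ ((1:ℝ)/3) :=
    continuous_abs.rpow_const (fun x => Or.inr (by norm_num))
  rw [continuous_iff_continuousAt]
  intro y
  rcases lt_trichotomy y 0 with h | rfl | h
  · have : (fun z => -((-z) ^ ((1:ℝ)/3))) =ᶠ[nhds y] cbrt := by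
      filter_upwards [eventually_lt_nhds h] with z hz using (cbrt_of_neg hz).symm
    exact ContinuousAt.congr (by fun_prop (disch := norm_num)) this
  · have key : Tendsto cbrt (nhds 0) (nhds 0) := by
      apply squeeze_zero_norm (a := fun y : ℝ => |y| ^ ((1:ℝ)/3))
      · intro z
        have : ‖cbrt z‖ = |Real.sign z| * |z| ^ ((1:ℝ)/3) := by
          rw [cbrt, norm_mul]
          simp [abs_of_nonneg (Real.rpow_nonneg (abs_nonneg z) _)]
        rw [this]
        rcases Real.sign_apply_eq z with h | h | h <;> rw [h] <;> simp <;> positivity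
      · have := habs.tendsto 0
        simpa using this
    simpa [ContinuousAt, cbrt_zero] using key
  · have : (fun z => z ^ ((1:ℝ)/3)) =ᶠ[nhds y] cbrt := by
      filter_upwards [eventually_gt_nhds h] with z hz using (cbrt_of_pos hz).symm
    exact ContinuousAt.congr (by fun_prop (disch := norm_num)) this

lemma hasDerivAt_cbrt {y : ℝ} (hy : y ≠ 0) : HasDerivAt cbrt (|y| ^ (-(2:ℝ)/3) / 3) y := by
  rcases hy.lt_or_gt with h | h
  · have : (fun z => -((-z) ^ ((1:ℝ)/3))) =ᶠ[nhds y] cbrt := by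
      filter_upwards [eventually_lt_nhds h] with z hz using (cbrt_of_neg hz).symm
    apply HasDerivAt.congr_of_eventuallyEq _ this.symm
    have hd : HasDerivAt (fun z : ℝ => (-z) ^ ((1:ℝ)/3)) (((1:ℝ)/3) * (-y) ^ ((1:ℝ)/3 - 1) * (-1)) y := by
      exact (Real.hasDerivAt_rpow_const (Or.inl (by linarith))).comp y (hasDerivAt_neg y)
    refine hd.neg.congr_deriv ?_
    rw [abs_of_neg h]
    rw [show (1:ℝ)/3 - 1 = -(2:ℝ)/3 by norm_num]
    ring
  · have : (fun z => z ^ ((1:ℝ)/3)) =ᶠ[nhds y] cbrt := by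
      filter_upwards [eventually_gt_nhds h] with z hz using (cbrt_of_pos hz).symm
    apply HasDerivAt.congr_of_eventuallyEq _ this.symm
    have hd := Real.hasDerivAt_rpow_const (x := y) (p := (1:ℝ)/3) (Or.inl hy)
    refine hd.congr_deriv ?_
    rw [abs_of_pos h, show (1:ℝ)/3 - 1 = -(2:ℝ)/3 by norm_num]
    ring

noncomputable def fI (t : ℝ) : ℝ := (t ^ 2) ^ ((1 : ℝ) / 3) - cbrt (t ^ 2 - 1)
noncomputable def wI (t : ℝ) : ℝ := |t ^ 2 - 1| ^ (-(2:ℝ)/3)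
noncomputable def FI (t : ℝ) : ℝ := (3/5) * (t * fI t)

lemma continuous_fI : Continuous fI := by
  unfold fI
  apply Continuous.sub
  · exact (continuous_pow 2).rpow_const (fun x => Or.inr (by norm_num))
  · exact continuous_cbrt.comp (by fun_prop)

lemma fI_nonneg (t : ℝ) : 0 ≤ fI t := by
  unfold fI
  have h1 : cbrt (t^2 - 1) ≤ cbrt (t^2) := cbrt_strictMono.monotone (by linarith)
  rw [cbrt_nonneg_eq (sq_nonneg t)] at h1
  linarith

lemma fI_le {t : ℝ} (ht : 1 ≤ t) : fI t ≤ t ^ (-(4:ℝ)/3) := by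
  have ht0 : 0 < t := by linarith
  set a := (t^2) ^ ((1:ℝ)/3) with ha
  set b := cbrt (t^2 - 1) with hb
  have ha3 : a ^ 3 = t ^ 2 := rpow_third_cube (sq_nonneg t)
  have hb3 : b ^ 3 = t ^ 2 - 1 := cbrt_cube _
  have hb0 : 0 ≤ b := by
    rw [hb, cbrt_nonneg_eq (by nlinarith)]
    exact Real.rpow_nonneg (by nlinarith) _
  have hba : b ≤ a := by
    have := cbrt_strictMono.monotone (show t^2 - 1 ≤ t^2 by linarith)
    rwa [cbrt_nonneg_eq (sq_nonneg t)] at this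
  have ha1 : 1 ≤ a := by
    have h := Real.rpow_le_rpow zero_le_one (show (1:ℝ) ≤ t^2 by nlinarith) (by norm_num : (0:ℝ) ≤ 1/3)
    rwa [Real.one_rpow] at h
  have key : a - b ≤ 1 / a ^ 2 := by
    rw [le_div_iff₀ (by positivity)]
    nlinarith [mul_nonneg hb0 (mul_nonneg hb0 hb0), mul_nonneg hb0 (sub_nonneg.mpr hba)]
  have ha2 : a ^ 2 = t ^ ((4:ℝ)/3) := by
    rw [ha, ← Real.rpow_natCast ((t^2) ^ ((1:ℝ)/3)) 2, ← Real.rpow_mul (sq_nonneg t),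
      ← Real.rpow_natCast t 2, ← Real.rpow_mul ht0.le]
    norm_num
  have : 1 / a ^ 2 = t ^ (-(4:ℝ)/3) := by
    rw [ha2, one_div, ← Real.rpow_neg ht0.le]
    norm_num
  unfold fI
  rw [← this]
  exact key

lemma integrableOn_fI : IntegrableOn fI (Ioi (0:ℝ)) volume := by
  have h1 : IntegrableOn fI (Ioc (0:ℝ) 1) volume := continuous_fI.integrableOn_Ioc
  have h2 : IntegrableOn fI (Ioi (1:ℝ)) volume := by
    apply Integrable.mono' (g := fun t : ℝ => t ^ (-(4:ℝ)/3))
      (integrableOn_Ioi_rpow_of_lt (by norm_num) one_pos)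
      continuous_fI.aestronglyMeasurable.restrict
    refine (ae_restrict_iff' measurableSet_Ioi).mpr (ae_of_all _ fun t ht => ?_)
    rw [Real.norm_eq_abs, abs_of_nonneg (fI_nonneg t)]
    exact fI_le (le_of_lt ht)
  rw [← Ioc_union_Ioi_eq_Ioi (zero_le_one (α := ℝ))]
  exact h1.union h2

lemma measurable_wI : Measurable wI := by unfold wI; fun_prop

lemma wI_nonneg (t : ℝ) : 0 ≤ wI t := Real.rpow_nonneg (abs_nonneg _) _

lemma integrableOn_wI : IntegrableOn wI (Ioi (0:ℝ)) volume := by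
  have hr : (-1:ℝ) < -(2:ℝ)/3 := by norm_num
  -- majorant |t-1| ^ (-2/3) on Ioc 0 2
  have hm1 : IntegrableOn (fun t : ℝ => |t - 1| ^ (-(2:ℝ)/3)) (Ioc (0:ℝ) 1) volume := by
    have h0 : IntervalIntegrable (fun x : ℝ => x ^ (-(2:ℝ)/3)) volume 0 1 :=
      intervalIntegral.intervalIntegrable_rpow' hr
    have h1 : IntervalIntegrable (fun x : ℝ => (1 - x) ^ (-(2:ℝ)/3)) volume 0 1 := by
      have := (h0.comp_sub_left 1).symm
      simpa using this
    have h2 := (intervalIntegrable_iff_integrableOn_Ioc_of_le (by norm_num : (0:ℝ) ≤ 1)).mp h1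
    apply h2.congr_fun _ measurableSet_Ioc
    intro t ht
    obtain ⟨ht0, ht1⟩ := ht
    change (1 - t) ^ (-(2:ℝ)/3) = |t - 1| ^ (-(2:ℝ)/3)
    rw [abs_sub_comm, abs_of_nonneg (by linarith : (0:ℝ) ≤ 1 - t)]
  have hm2 : IntegrableOn (fun t : ℝ => |t - 1| ^ (-(2:ℝ)/3)) (Ioc (1:ℝ) 2) volume := by
    have h0 : IntervalIntegrable (fun x : ℝ => x ^ (-(2:ℝ)/3)) volume 0 1 :=
      intervalIntegral.intervalIntegrable_rpow' hr
    have h1 : IntervalIntegrable (fun x : ℝ => (x - 1) ^ (-(2:ℝ)/3)) volume 1 2 := by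
      have := h0.comp_sub_right 1
      have h11 : (1:ℝ) + 1 = 2 := by norm_num
      rw [h11] at this
      simpa using this
    have h2 := (intervalIntegrable_iff_integrableOn_Ioc_of_le (by norm_num : (1:ℝ) ≤ 2)).mp h1
    apply h2.congr_fun _ measurableSet_Ioc
    intro t ht
    obtain ⟨ht1, ht2⟩ := ht
    change (t - 1) ^ (-(2:ℝ)/3) = |t - 1| ^ (-(2:ℝ)/3)
    rw [abs_of_nonneg (by linarith : (0:ℝ) ≤ t - 1)]
  have hm : IntegrableOn (fun t : ℝ => |t - 1| ^ (-(2:ℝ)/3)) (Ioc (0:ℝ) 2) volume := by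
    rw [← Ioc_union_Ioc_eq_Ioc (by norm_num : (0:ℝ) ≤ 1) (by norm_num : (1:ℝ) ≤ 2)]
    exact hm1.union hm2
  have h1 : IntegrableOn wI (Ioc (0:ℝ) 2) volume := by
    apply Integrable.mono' hm measurable_wI.aestronglyMeasurable.restrict
    refine (ae_restrict_iff' measurableSet_Ioc).mpr (ae_of_all _ fun t ht => ?_)
    obtain ⟨ht0, ht2⟩ := ht
    rw [Real.norm_eq_abs, abs_of_nonneg (wI_nonneg t)]
    rcases eq_or_ne t 1 with rfl | hne
    · unfold wI; norm_num
    · have habs : 0 < |t - 1| := abs_pos.mpr (sub_ne_zero.mpr hne)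
      have hfac : |t^2 - 1| = |t - 1| * |t + 1| := by
        rw [← abs_mul]; ring_nf
      have hle : |t - 1| ≤ |t^2 - 1| := by
        rw [hfac]
        nlinarith [abs_nonneg (t-1), abs_of_pos (show (0:ℝ) < t + 1 by linarith)]
      exact Real.rpow_le_rpow_of_nonpos habs hle (by norm_num)
  have h2 : IntegrableOn wI (Ioi (2:ℝ)) volume := by
    have hint : IntegrableOn (fun t : ℝ => 2 * t ^ (-(4:ℝ)/3)) (Ioi (2:ℝ)) volume :=
      (integrableOn_Ioi_rpow_of_lt (by norm_num) (by norm_num)).const_mul 2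
    apply Integrable.mono' hint measurable_wI.aestronglyMeasurable.restrict
    refine (ae_restrict_iff' measurableSet_Ioi).mpr (ae_of_all _ fun t ht => ?_)
    have ht2 : (2:ℝ) < t := ht
    have ht0 : (0:ℝ) < t := by linarith
    rw [Real.norm_eq_abs, abs_of_nonneg (wI_nonneg t)]
    have hpos : (0:ℝ) < t^2/2 := by positivity
    have hle1 : wI t ≤ (t^2/2) ^ (-(2:ℝ)/3) := by
      unfold wI
      rw [abs_of_nonneg (by nlinarith : (0:ℝ) ≤ t^2 - 1)]
      exact Real.rpow_le_rpow_of_nonpos hpos (by nlinarith) (by norm_num)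
    have he : (t^2/2 : ℝ) ^ (-(2:ℝ)/3) = (t^2) ^ (-(2:ℝ)/3) * (2⁻¹ : ℝ) ^ (-(2:ℝ)/3) := by
      rw [div_eq_mul_inv, Real.mul_rpow (sq_nonneg t) (by norm_num)]
    have h2le : ((2:ℝ)⁻¹) ^ (-(2:ℝ)/3) ≤ 2 := by
      have heq : ((2:ℝ)⁻¹) ^ (-(2:ℝ)/3) = (2:ℝ) ^ ((2:ℝ)/3) := by
        rw [← Real.rpow_neg_one 2, ← Real.rpow_mul (by norm_num : (0:ℝ) ≤ 2)]
        norm_num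
      rw [heq]
      calc (2:ℝ) ^ ((2:ℝ)/3) ≤ (2:ℝ) ^ (1:ℝ) :=
            Real.rpow_le_rpow_of_exponent_le one_le_two (by norm_num)
        _ = 2 := Real.rpow_one 2
    have ht43 : (t^2 : ℝ) ^ (-(2:ℝ)/3) = t ^ (-(4:ℝ)/3) := by
      rw [← Real.rpow_natCast t 2, ← Real.rpow_mul ht0.le]
      norm_num
    calc wI t ≤ (t^2/2) ^ (-(2:ℝ)/3) := hle1
      _ = t ^ (-(4:ℝ)/3) * ((2:ℝ)⁻¹) ^ (-(2:ℝ)/3) := by rw [he, ht43]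
      _ ≤ t ^ (-(4:ℝ)/3) * 2 := by
          apply mul_le_mul_of_nonneg_left h2le (Real.rpow_nonneg ht0.le _)
      _ = 2 * t ^ (-(4:ℝ)/3) := by ring
  rw [← Ioc_union_Ioi_eq_Ioi (by norm_num : (0:ℝ) ≤ 2)]
  exact h1.union h2

lemma hasDerivAt_FI {t : ℝ} (ht0 : 0 < t) (ht1 : t ≠ 1) :
    HasDerivAt FI (fI t - (2/5) * wI t) t := by
  have hsq : t^2 - 1 ≠ 0 := by
    intro h
    have : t = 1 := by nlinarith
    exact ht1 this
  have ht2 : (t:ℝ)^2 ≠ 0 := by positivity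
  have hd1 : HasDerivAt (fun u : ℝ => (u^2) ^ ((1:ℝ)/3))
      (((1:ℝ)/3) * (t^2) ^ ((1:ℝ)/3 - 1) * (2*t)) t := by
    have hpow : HasDerivAt (fun u : ℝ => u^2) (2*t) t := by
      simpa using hasDerivAt_pow 2 t
    have := hpow.rpow_const (p := (1:ℝ)/3) (Or.inl ht2)
    convert this using 1
    ring
  have hd2 : HasDerivAt (fun u : ℝ => cbrt (u^2 - 1))
      ((|t^2 - 1| ^ (-(2:ℝ)/3) / 3) * (2*t)) t := by
    have hpow : HasDerivAt (fun u : ℝ => u^2 - 1) (2*t) t := by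
      simpa using (hasDerivAt_pow 2 t).sub_const 1
    have hc := hasDerivAt_cbrt hsq
    have := HasDerivAt.scomp (𝕜 := ℝ) (𝕜' := ℝ) t hc hpow
    simpa [mul_comm, Function.comp_def] using this
  have hdf : HasDerivAt fI
      (((1:ℝ)/3) * (t^2) ^ ((1:ℝ)/3 - 1) * (2*t) - (|t^2 - 1| ^ (-(2:ℝ)/3) / 3) * (2*t)) t :=
    hd1.sub hd2
  have hF : HasDerivAt FI ((3/5) * (1 * fI t + t *
      (((1:ℝ)/3) * (t^2) ^ ((1:ℝ)/3 - 1) * (2*t) - (|t^2 - 1| ^ (-(2:ℝ)/3) / 3) * (2*t)))) t := by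
    exact (((hasDerivAt_id t).mul hdf).const_mul (3/5 : ℝ))
  convert hF using 1
  -- algebra
  have e1 : (t^2 : ℝ) * (t^2) ^ ((1:ℝ)/3 - 1) = (t^2) ^ ((1:ℝ)/3) := by
    nth_rewrite 1 [← Real.rpow_one (t^2)]
    rw [← Real.rpow_add (by positivity)]
    norm_num
  have e2 : (t^2 - 1 : ℝ) * |t^2 - 1| ^ (-(2:ℝ)/3) = cbrt (t^2 - 1) := by
    have := cbrt_mul_self (t^2 - 1) hsq
    simpa using this
  unfold fI wI
  have expand : t * (((1:ℝ)/3) * (t^2) ^ ((1:ℝ)/3 - 1) * (2*t) - (|t^2 - 1| ^ (-(2:ℝ)/3) / 3) * (2*t))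
      = (2/3) * ((t^2) * (t^2) ^ ((1:ℝ)/3 - 1)) - (2/3) * ((t^2 - 1) * |t^2 - 1| ^ (-(2:ℝ)/3))
        - (2/3) * |t^2 - 1| ^ (-(2:ℝ)/3) := by ring
  rw [mul_add, expand, e1, e2]
  ring

lemma FI_one : FI 1 = 3/5 := by
  unfold FI fI
  norm_num [cbrt_zero]

lemma FI_zero : FI 0 = 0 := by unfold FI; ring

lemma tendsto_FI : Filter.Tendsto FI Filter.atTop (nhds 0) := by
  apply squeeze_zero' (g := fun t : ℝ => (3/5) * t ^ (-(1:ℝ)/3))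
  · filter_upwards [Filter.eventually_ge_atTop (1:ℝ)] with t ht
    unfold FI
    have := fI_nonneg t
    nlinarith
  · filter_upwards [Filter.eventually_ge_atTop (1:ℝ)] with t ht
    have ht0 : (0:ℝ) < t := by linarith
    unfold FI
    have h1 : t * fI t ≤ t * t ^ (-(4:ℝ)/3) := by
      apply mul_le_mul_of_nonneg_left (fI_le ht) ht0.le
    have h2 : t * t ^ (-(4:ℝ)/3) = t ^ (-(1:ℝ)/3) := by
      nth_rewrite 1 [← Real.rpow_one t]
      rw [← Real.rpow_add ht0]
      norm_num
    nlinarith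
  · have := (tendsto_rpow_neg_atTop (y := (1:ℝ)/3) (by norm_num)).const_mul (3/5 : ℝ)
    simpa [neg_div] using this

lemma continuous_FI : Continuous FI := by
  unfold FI
  exact continuous_const.mul (continuous_id.mul continuous_fI)

lemma hasDerivAt_phi {t : ℝ} (hsq : t^2 - 1 ≠ 0) :
    HasDerivAt (fun u : ℝ => cbrt (u^2 - 1)) ((|t^2 - 1| ^ (-(2:ℝ)/3) / 3) * (2*t)) t := by
  have hpow : HasDerivAt (fun u : ℝ => u^2 - 1) (2*t) t := by
    simpa using (hasDerivAt_pow 2 t).sub_const 1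
  have hc := hasDerivAt_cbrt hsq
  have := HasDerivAt.scomp (𝕜 := ℝ) (𝕜' := ℝ) t hc hpow
  simpa [mul_comm, Function.comp_def] using this

lemma integrand_integrableOn {u : Set ℝ} (hu : u ⊆ Ioi 0) :
    IntegrableOn (fun t => fI t - (2/5) * wI t) u volume :=
  (integrableOn_fI.mono_set hu).sub ((integrableOn_wI.mono_set hu).const_mul _)

lemma integral_sub_eq : ∫ t in Ioi (0:ℝ), (fI t - (2/5) * wI t) = 0 := by
  have hint1 : IntegrableOn (fun t => fI t - (2/5) * wI t) (Ioc (0:ℝ) 1) volume :=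
    integrand_integrableOn Ioc_subset_Ioi_self
  have hint2 : IntegrableOn (fun t => fI t - (2/5) * wI t) (Ioi (1:ℝ)) volume :=
    integrand_integrableOn (Ioi_subset_Ioi zero_le_one)
  have hD : ∫ t in Ioc (0:ℝ) 1, (fI t - (2/5) * wI t) = 3/5 := by
    have h := intervalIntegral.integral_eq_sub_of_hasDeriv_right_of_le
      (f := FI) (f' := fun t => fI t - (2/5) * wI t) zero_le_one
      continuous_FI.continuousOn
      (fun x hx => (hasDerivAt_FI hx.1 (ne_of_lt hx.2)).hasDerivWithinAt)
      ((intervalIntegrable_iff_integrableOn_Ioc_of_le zero_le_one).mpr hint1)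
    rw [intervalIntegral.integral_of_le zero_le_one] at h
    rw [h, FI_one, FI_zero]
    norm_num
  have hC : ∫ t in Ioi (1:ℝ), (fI t - (2/5) * wI t) = -(3/5) := by
    have h := integral_Ioi_of_hasDerivAt_of_tendsto
      (f := FI) (f' := fun t => fI t - (2/5) * wI t) (a := 1)
      continuous_FI.continuousWithinAt
      (fun x hx => hasDerivAt_FI (lt_trans zero_lt_one hx) (ne_of_gt hx))
      hint2 tendsto_FI
    rw [h, FI_one]
    norm_num
  rw [← Ioc_union_Ioi_eq_Ioi (zero_le_one (α := ℝ)),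
    setIntegral_union (Ioc_disjoint_Ioi le_rfl) measurableSet_Ioi hint1 hint2, hD, hC]
  norm_num

lemma integral_fI_eq : ∫ t in Ioi (0:ℝ), fI t = (2/5) * ∫ t in Ioi (0:ℝ), wI t := by
  have h := integral_sub_eq
  rw [integral_sub integrableOn_fI (integrableOn_wI.const_mul _), integral_const_mul] at h
  linarith

lemma rhs_eq : ∫ x in Ioi (-1:ℝ), 1 / Real.sqrt (x^3+1)
    = (2/3) * ∫ t in Ioi (0:ℝ), wI t := by
  set s : Set ℝ := Ioi 0 \ {1} with hsdef
  have hs : MeasurableSet s := measurableSet_Ioi.diff (measurableSet_singleton 1)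
  have hsae : s =ᵐ[volume] Ioi (0:ℝ) :=
    diff_ae_eq_self.mpr (measure_mono_null inter_subset_right (measure_singleton 1))
  have hmem : ∀ t ∈ s, 0 < t ∧ t ≠ 1 := by
    intro t ht
    exact ⟨ht.1, by simpa using ht.2⟩
  have hsq : ∀ t ∈ s, t^2 - 1 ≠ 0 := by
    intro t ht
    obtain ⟨ht0, ht1⟩ := hmem t ht
    intro h
    have h2 : (t - 1) * (t + 1) = 0 := by nlinarith
    rcases mul_eq_zero.mp h2 with h3 | h3
    · exact ht1 (by linarith)
    · linarith
  have hderiv : ∀ t ∈ s, HasDerivWithinAt (fun u : ℝ => cbrt (u^2 - 1))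
      ((|t^2 - 1| ^ (-(2:ℝ)/3) / 3) * (2*t)) s t :=
    fun t ht => (hasDerivAt_phi (hsq t ht)).hasDerivWithinAt
  have hinj : InjOn (fun u : ℝ => cbrt (u^2 - 1)) s := by
    intro a ha b hb h
    have h2 : a^2 - 1 = b^2 - 1 := cbrt_inj h
    have ha0 := (hmem a ha).1
    have hb0 := (hmem b hb).1
    have h3 : (a - b) * (a + b) = 0 := by nlinarith
    rcases mul_eq_zero.mp h3 with h4 | h4
    · linarith
    · linarith
  have himg : (fun u : ℝ => cbrt (u^2 - 1)) '' s = Ioi (-1:ℝ) \ {0} := by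
    ext x
    simp only [mem_image, mem_diff, mem_Ioi, mem_singleton_iff, hsdef]
    constructor
    · rintro ⟨t, ⟨ht0, ht1⟩, rfl⟩
      have ht0' : (0:ℝ) < t := ht0
      have ht1' : t ≠ 1 := by simpa using ht1
      constructor
      · have h := cbrt_strictMono (show (-1:ℝ) < t^2 - 1 by nlinarith)
        have hc : cbrt (-1) = -1 := by
          rw [cbrt_of_neg (by norm_num)]
          norm_num
        rwa [hc] at h
      · intro h
        exact hsq t ⟨ht0, ht1⟩ (cbrt_eq_zero_iff.mp h)
    · rintro ⟨hx1, hx0⟩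
      have hodd : Odd 3 := ⟨1, by norm_num⟩
      have hx3 : (0:ℝ) < x^3 + 1 := by
        have := (Odd.strictMono_pow (R := ℝ) hodd) hx1
        norm_num at this
        linarith
      refine ⟨Real.sqrt (x^3+1), ⟨?_, ?_⟩, ?_⟩
      · exact Real.sqrt_pos.mpr hx3
      · intro h
        have hsq2 := Real.sq_sqrt hx3.le
        rw [h] at hsq2
        have : x^3 = 0 := by nlinarith
        exact hx0 (pow_eq_zero_iff (n := 3) (by norm_num)|>.mp this)
      · have hsq2 := Real.sq_sqrt hx3.le
        rw [hsq2]
        have : x^3 + 1 - 1 = x^3 := by ring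
        rw [this, cbrt_pow3]
  have key := integral_image_eq_integral_abs_deriv_smul hs hderiv hinj
    (fun x => 1 / Real.sqrt (x^3+1))
  rw [himg] at key
  have hl : ∫ x in Ioi (-1:ℝ) \ {0}, 1 / Real.sqrt (x^3+1)
      = ∫ x in Ioi (-1:ℝ), 1 / Real.sqrt (x^3+1) :=
    setIntegral_congr_set
      (diff_ae_eq_self.mpr (measure_mono_null inter_subset_right (measure_singleton 0)))
  have hr : ∫ t in s, |(|t^2 - 1| ^ (-(2:ℝ)/3) / 3) * (2*t)| • (1 / Real.sqrt ((cbrt (t^2-1))^3+1))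
      = ∫ t in s, (2/3) * wI t := by
    apply setIntegral_congr_fun hs
    intro t ht
    obtain ⟨ht0, ht1⟩ := hmem t ht
    have habs : |(|t^2 - 1| ^ (-(2:ℝ)/3) / 3) * (2*t)| = (|t^2 - 1| ^ (-(2:ℝ)/3) / 3) * (2*t) := by
      apply abs_of_nonneg
      have := Real.rpow_nonneg (abs_nonneg (t^2-1)) (-(2:ℝ)/3)
      positivity
    have hcube : (cbrt (t^2-1))^3 + 1 = t^2 := by rw [cbrt_cube]; ring
    have hsqrt : Real.sqrt ((cbrt (t^2-1))^3 + 1) = t := by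
      rw [hcube, Real.sqrt_sq ht0.le]
    simp only [habs, hsqrt, smul_eq_mul]
    unfold wI
    field_simp
  rw [hl] at key
  rw [key]
  calc ∫ t in s, |(|t^2 - 1| ^ (-(2:ℝ)/3) / 3) * (2*t)| • (1 / Real.sqrt ((fun u : ℝ => cbrt (u^2-1)) t ^3+1))
        = ∫ t in s, (2/3) * wI t := hr
    _ = ∫ t in Ioi (0:ℝ), (2/3) * wI t := setIntegral_congr_set hsae
    _ = (2/3) * ∫ t in Ioi (0:ℝ), wI t := integral_const_mul _ _

theorem stmt1 :
    IntegrableOn (fun t : ℝ => (t ^ 2) ^ ((1 : ℝ) / 3) - cbrt (t ^ 2 - 1)) (Ioi 0) volume ∧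
    (∫ t in Ioi (0 : ℝ), ((t ^ 2) ^ ((1 : ℝ) / 3) - cbrt (t ^ 2 - 1)))
      = (3 / 5) * ∫ x in Ioi (-1 : ℝ), 1 / Real.sqrt (x ^ 3 + 1) := by
  constructor
  · exact integrableOn_fI
  · show ∫ t in Ioi (0:ℝ), fI t = (3 / 5) * ∫ x in Ioi (-1 : ℝ), 1 / Real.sqrt (x ^ 3 + 1)
    rw [integral_fI_eq, rhs_eq]
    ring
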